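/- Lemma 11 (rotational invariance of the reduced-MP residual). For every fixed ℓ ∈ [L] and i ∈ [n_ℓ], let q_s^(ℓ) denote the residual after s iterations of reduced MP applied to y_i^(ℓ) with dictionary Y_ℓ \ {y_i^(ℓ)}, and write q_{s∥} = P∥ q_s^(ℓ), q_{s⊥} = P⊥ q_s^(ℓ). Then the distributions of q_{s∥} and q_{s⊥} are rotationally invariant on S_ℓ and S_ℓ^⊥, respectively: V∥ q_{s∥} has the same distribution as q_{s∥} and V⊥ q_{s⊥} has the same distribution as q_{s⊥}, for all unitary matrices of the form V∥ = U^(ℓ) W∥ (U^(ℓ))ᵀ + P⊥ and V⊥ = P∥ + U_o^(ℓ) W⊥ (U_o^(ℓ))ᵀ, where W∥ ∈ ℝ^{d_ℓ×d_ℓ} and W⊥ ∈ ℝ^{(m−d_ℓ)×(m−d_ℓ)} are unitary and the columns of U_o^(ℓ) ∈ ℝ^{m×(m−d_ℓ)} form an orthonormal basis of S_ℓ^⊥. -/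

import Mathlib

open MeasureTheory ProbabilityTheory Real Finset
open scoped RealInnerProductSpace ENNReal NNReal

noncomputable section

abbrev Vec (m : ℕ) := EuclideanSpace ℝ (Fin m)

/-- Residual of `y` after orthogonal projection onto the span of the dictionary atoms
indexed by `Λ`; this equals `(I - D_Λ D_Λ†) y`. -/
def projResidual {m : ℕ} {ι : Type*} (D : ι → Vec m) (Λ : Finset ι) (y : Vec m) : Vec m :=
  y - (Submodule.orthogonalProjectionOnto (Submodule.span ℝ (D '' (↑Λ : Set ι))) y : Vec m)

/-- `Λ, r` is a run of `T` iterations of OMP on data point `y` with dictionary `D`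
(ties in the selection rule broken arbitrarily). -/
structure IsOMPRun {m : ℕ} {ι : Type*} [DecidableEq ι] (D : ι → Vec m) (y : Vec m) (T : ℕ)
    (Λ : ℕ → Finset ι) (r : ℕ → Vec m) : Prop where
  init_idx : Λ 0 = ∅
  init_res : r 0 = y
  step : ∀ s < T, ∃ j ∉ Λ s,
    Λ (s + 1) = insert j (Λ s) ∧ ∀ j' ∉ Λ s, |⟪D j', r s⟫| ≤ |⟪D j, r s⟫|
  res : ∀ s < T, r (s + 1) = projResidual D (Λ (s + 1)) y

/-- `sel, q` is a run of `T` iterations of MP on data point `y` with dictionary `D`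
(ties broken arbitrarily); `sel s` is the index `ω_{s+1}` selected in iteration `s+1`. -/
structure IsMPRun {m : ℕ} {ι : Type*} (D : ι → Vec m) (y : Vec m) (T : ℕ)
    (sel : ℕ → ι) (q : ℕ → Vec m) : Prop where
  init : q 0 = y
  sel_max : ∀ s < T, ∀ j, |⟪D j, q s⟫| ≤ |⟪D (sel s), q s⟫|
  res : ∀ s < T, q (s + 1) = q s - (⟪D (sel s), q s⟫ / ‖D (sel s)‖ ^ 2) • D (sel s)

section Concrete

variable {m : ℕ} {ι : Type*} [Fintype ι] [LinearOrder ι]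

/-- The index selected by OMP with smallest-index tie-breaking, given the current active
set `Λ` and residual `r` (`none` if the dictionary is exhausted). -/
def ompSelect (D : ι → Vec m) (Λ : Finset ι) (r : Vec m) : Option ι :=
  let S := (Finset.univ \ Λ).filter fun j => ∀ j' ∈ Finset.univ \ Λ, |⟪D j', r⟫| ≤ |⟪D j, r⟫|
  if h : S.Nonempty then some (S.min' h) else none

/-- The state (active set, residual) of OMP with smallest-index tie-breaking after `s`
iterations. -/
def ompState (D : ι → Vec m) (y : Vec m) : ℕ → Finset ι × Vec m
  | 0 => (∅, y)
  | s + 1 =>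
    let p := ompState D y s
    match ompSelect D p.1 p.2 with
    | some j => (insert j p.1, projResidual D (insert j p.1) y)
    | none => p

/-- The index selected by MP with smallest-index tie-breaking for the residual `q`. -/
def mpSelect (D : ι → Vec m) (q : Vec m) : Option ι :=
  let S := Finset.univ.filter fun j => ∀ j', |⟪D j', q⟫| ≤ |⟪D j, q⟫|
  if h : S.Nonempty then some (S.min' h) else none

/-- The MP residual after `s` iterations, with smallest-index tie-breaking. -/
def mpRes (D : ι → Vec m) (y : Vec m) : ℕ → Vec m
  | 0 => y
  | s + 1 =>
    let q := mpRes D y s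
    match mpSelect D q with
    | some j => q - (⟪D j, q⟫ / ‖D j‖ ^ 2) • D j
    | none => q

/-- The set of distinct indices selected by MP during the first `s` iterations. -/
def mpSelUpTo [DecidableEq ι] (D : ι → Vec m) (y : Vec m) (s : ℕ) : Finset ι :=
  (Finset.range s).biUnion fun t => (mpSelect D (mpRes D y t)).toFinset

end Concrete

/-- The statistical data model for subspace clustering: `L` subspaces of `ℝ^m` of dimensions
`d ℓ` given as ranges of linear isometries `U ℓ` (orthonormal basis matrices), `n ℓ` points per
subspace, with subspace components `a ℓ i` i.i.d. uniform on the unit sphere (characterized by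
unit norm and rotational invariance) and noise `z ℓ i` i.i.d. `N(0, (σ²/m) I_m)`, all jointly
independent. -/
structure SubspaceClusterModel (Ω : Type*) [MeasurableSpace Ω] (μ : Measure Ω)
    (L m : ℕ) (d n : Fin L → ℕ) (σ : ℝ)
    (U : (ℓ : Fin L) → EuclideanSpace ℝ (Fin (d ℓ)) →ₗᵢ[ℝ] Vec m)
    (a : (ℓ : Fin L) → Fin (n ℓ) → Ω → EuclideanSpace ℝ (Fin (d ℓ)))
    (z : (ℓ : Fin L) → Fin (n ℓ) → Ω → Vec m) : Prop where
  meas_a : ∀ ℓ i, Measurable (a ℓ i)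
  meas_z : ∀ ℓ i, Measurable (z ℓ i)
  norm_a : ∀ ℓ i, ∀ᵐ ω ∂μ, ‖a ℓ i ω‖ = 1
  rotinv_a : ∀ ℓ i, ∀ W : EuclideanSpace ℝ (Fin (d ℓ)) ≃ₗᵢ[ℝ] EuclideanSpace ℝ (Fin (d ℓ)),
    Measure.map (fun ω => W (a ℓ i ω)) μ = Measure.map (a ℓ i) μ
  coord_indep_z : ∀ ℓ i, iIndepFun (fun k ω => z ℓ i ω k) μ
  gauss_z : ∀ ℓ i, ∀ k : Fin m,
    Measure.map (fun ω => z ℓ i ω k) μ = gaussianReal 0 (Real.toNNReal (σ ^ 2 / m))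
  indep_az : ∀ ℓ i, IndepFun (a ℓ i) (z ℓ i) μ
  indep_pts : iIndepFun
    (fun (p : (ℓ : Fin L) × Fin (n ℓ)) ω => (a p.1 p.2 ω, z p.1 p.2 ω)) μ

/-- The affinity between two subspaces given by orthonormal bases `Uk, Ul`:
`‖Ukᵀ Ul‖_F / √(min dk dl)`. -/
def affinity {m dk dl : ℕ} (Uk : EuclideanSpace ℝ (Fin dk) →ₗᵢ[ℝ] Vec m)
    (Ul : EuclideanSpace ℝ (Fin dl) →ₗᵢ[ℝ] Vec m) : ℝ :=
  Real.sqrt (∑ p : Fin dk, ∑ q : Fin dl,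
      ⟪Uk (EuclideanSpace.single p 1), Ul (EuclideanSpace.single q 1)⟫ ^ 2) /
    Real.sqrt (min dk dl)

/-- Total number of data points. -/
def Ntot (L : ℕ) (n : Fin L → ℕ) : ℕ := ∑ ℓ, n ℓ

/-- Maximal subspace dimension. -/
def dMax (L : ℕ) (d : Fin L → ℕ) : ℕ := Finset.univ.sup d

/-- Minimal sampling density `ρ_min = min_ℓ (n_ℓ - 1)/d_ℓ`. -/
def rhoMin (L : ℕ) (d n : Fin L → ℕ) : ℝ := ⨅ ℓ : Fin L, ((n ℓ : ℝ) - 1) / (d ℓ : ℝ)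

/-- The clustering condition with constant `c(σ) = cA` and effective iteration count `s`. -/
def ClusteringCond (L m : ℕ) (d n : Fin L → ℕ) (σ : ℝ) (s : ℕ)
    (U : (ℓ : Fin L) → EuclideanSpace ℝ (Fin (d ℓ)) →ₗᵢ[ℝ] Vec m) (cA : ℝ) : Prop :=
  ∀ k ℓ : Fin L, k ≠ ℓ →
    affinity (U k) (U ℓ) +
        10 * σ / Real.sqrt (Real.log ((Ntot L n : ℝ) ^ 3 * s)) *
          (Real.sqrt (dMax L d) / Real.sqrt m * cA +
            Real.sqrt 2 / Real.sqrt (rhoMin L d n) * (1 + 3 / 2 * σ)) ≤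
      1 / (8 * Real.log ((Ntot L n : ℝ) ^ 3 * s))

/-- The probability bound `P⋆`. -/
def Pstar (L m : ℕ) (d n : Fin L → ℕ) (cd cm : ℝ) : ℝ :=
  1 - 6 / (Ntot L n : ℝ) - 5 * (Ntot L n : ℝ) * Real.exp (-(cm * m)) -
    6 * ∑ ℓ, (n ℓ : ℝ) * Real.exp (-(cd * d ℓ))

/-- Smallest singular value of a linear map out of `ℝ^s`. -/
def sminLin {s d : ℕ} (A : EuclideanSpace ℝ (Fin s) →ₗ[ℝ] EuclideanSpace ℝ (Fin d)) : ℝ :=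
  ⨅ v : Metric.sphere (0 : EuclideanSpace ℝ (Fin s)) 1, ‖A (v : EuclideanSpace ℝ (Fin s))‖

/-- Spectral norm (largest singular value) of a linear map between Euclidean spaces. -/
def specNorm {s m : ℕ} (A : EuclideanSpace ℝ (Fin s) →ₗ[ℝ] Vec m) : ℝ :=
  ‖LinearMap.toContinuousLinearMap A‖


/-- Orthogonal projection `P∥ = U Uᵀ` onto the subspace spanned by the orthonormal columns
of `U`, as a map `ℝ^M → ℝ^M`. -/
def projPar {M d : ℕ} (U : EuclideanSpace ℝ (Fin d) →ₗᵢ[ℝ] Vec M) (x : Vec M) : Vec M :=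
  (Submodule.orthogonalProjectionOnto (LinearMap.range U.toLinearMap) x : Vec M)

/-- Orthogonal projection `P⊥ = I - U Uᵀ` onto the orthogonal complement. -/
def projPerp {M d : ℕ} (U : EuclideanSpace ℝ (Fin d) →ₗᵢ[ℝ] Vec M) (x : Vec M) : Vec M :=
  x - projPar U x

/-- The data point `y_i^(ℓ) = U^(ℓ) a_i^(ℓ) + z_i^(ℓ)`. -/
def dataPt {Ω : Type*} {L M : ℕ} {d n : Fin L → ℕ}
    (U : (ℓ : Fin L) → EuclideanSpace ℝ (Fin (d ℓ)) →ₗᵢ[ℝ] Vec M)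
    (a : (ℓ : Fin L) → Fin (n ℓ) → Ω → EuclideanSpace ℝ (Fin (d ℓ)))
    (z : (ℓ : Fin L) → Fin (n ℓ) → Ω → Vec M)
    (ℓ : Fin L) (i : Fin (n ℓ)) (ω : Ω) : Vec M :=
  U ℓ (a ℓ i ω) + z ℓ i ω

/-- The reduced dictionary `Y_ℓ \ {y_i^(ℓ)}`. -/
def redDict {Ω : Type*} {L M : ℕ} {d n : Fin L → ℕ}
    (U : (ℓ : Fin L) → EuclideanSpace ℝ (Fin (d ℓ)) →ₗᵢ[ℝ] Vec M)
    (a : (ℓ : Fin L) → Fin (n ℓ) → Ω → EuclideanSpace ℝ (Fin (d ℓ)))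
    (z : (ℓ : Fin L) → Fin (n ℓ) → Ω → Vec M)
    (ℓ : Fin L) (i : Fin (n ℓ)) (ω : Ω) : {j : Fin (n ℓ) // j ≠ i} → Vec M :=
  fun j => dataPt U a z ℓ j.1 ω

/-- The full dictionary `Y \ {y_i^(ℓ)}`. -/
def fullDict {Ω : Type*} {L M : ℕ} {d n : Fin L → ℕ}
    (U : (ℓ : Fin L) → EuclideanSpace ℝ (Fin (d ℓ)) →ₗᵢ[ℝ] Vec M)
    (a : (ℓ : Fin L) → Fin (n ℓ) → Ω → EuclideanSpace ℝ (Fin (d ℓ)))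
    (z : (ℓ : Fin L) → Fin (n ℓ) → Ω → Vec M)
    (ℓ : Fin L) (i : Fin (n ℓ)) (ω : Ω) :
    {p : (k : Fin L) × Fin (n k) // p ≠ ⟨ℓ, i⟩} → Vec M :=
  fun p => dataPt U a z p.1.1 p.1.2 ω

/-- State (selected index set, residual) after `s` iterations of reduced OMP for `y_i^(ℓ)`. -/
def redOMPstate {Ω : Type*} {L M : ℕ} {d n : Fin L → ℕ}
    (U : (ℓ : Fin L) → EuclideanSpace ℝ (Fin (d ℓ)) →ₗᵢ[ℝ] Vec M)
    (a : (ℓ : Fin L) → Fin (n ℓ) → Ω → EuclideanSpace ℝ (Fin (d ℓ)))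
    (z : (ℓ : Fin L) → Fin (n ℓ) → Ω → Vec M)
    (ℓ : Fin L) (i : Fin (n ℓ)) (s : ℕ) (ω : Ω) :
    Finset {j : Fin (n ℓ) // j ≠ i} × Vec M :=
  ompState (redDict U a z ℓ i ω) (dataPt U a z ℓ i ω) s

/-- Residual after `s` iterations of reduced MP for `y_i^(ℓ)`. -/
def redMPres {Ω : Type*} {L M : ℕ} {d n : Fin L → ℕ}
    (U : (ℓ : Fin L) → EuclideanSpace ℝ (Fin (d ℓ)) →ₗᵢ[ℝ] Vec M)
    (a : (ℓ : Fin L) → Fin (n ℓ) → Ω → EuclideanSpace ℝ (Fin (d ℓ)))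
    (z : (ℓ : Fin L) → Fin (n ℓ) → Ω → Vec M)
    (ℓ : Fin L) (i : Fin (n ℓ)) (s : ℕ) (ω : Ω) : Vec M :=
  mpRes (redDict U a z ℓ i ω) (dataPt U a z ℓ i ω) s

/-- The linear map `ℝ^d → ℝ^n` whose rows are the vectors `a j` (that is, `Aᵀ` where the
`a j` are the columns of `A`). -/
def rowsMap {n d : ℕ} (a : Fin n → EuclideanSpace ℝ (Fin d)) :
    EuclideanSpace ℝ (Fin d) →ₗ[ℝ] EuclideanSpace ℝ (Fin n) where
  toFun v := WithLp.toLp 2 (fun j => ⟪a j, v⟫)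
  map_add' u v := by
    ext j
    simp [inner_add_right]
  map_smul' c v := by
    ext j
    simp [inner_smul_right]

end

/-!
The residual is a deterministic function of the cluster's sample `(a_j, z_j)_j`, and MP only
sees inner products and norms, so if an orthogonal `V` satisfies `V U = U W` for an orthogonal
`W`, feeding MP the sample `(W a_j, V z_j)_j` rotates every residual by `V`. That transformed
sample has the same law as the original one: the `a_j` are rotationally invariant, each `z_j` is
a scaled standard Gaussian vector, and all of them are independent. Hence the residual's law is
`V`-invariant. Both `V∥ = U W Uᵀ + P⊥` and `V⊥ = P∥ + U_o W' U_oᵀ` are of this form (the latter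
with `W = 1`), and each commutes with its projection, which passes the invariance on to `q∥`
and `q⊥`.
-/

theorem measurable_of_countable_cases {α β κ : Type*} [MeasurableSpace α] [MeasurableSpace β]
    [Countable κ] {g : α → κ} {F : κ → α → β} (hg : ∀ k, MeasurableSet (g ⁻¹' {k}))
    (hF : ∀ k, Measurable (F k)) : Measurable fun x => F (g x) x := by
  intro B hB
  have hpre : (fun x => F (g x) x) ⁻¹' B = ⋃ k, g ⁻¹' {k} ∩ F k ⁻¹' B := by
    ext x
    simp
  rw [hpre]
  exact .iUnion fun k => (hg k).inter (hF k hB)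

noncomputable section MatchingPursuit

variable {m : ℕ} {ι : Type*}

def IsMPMax (D : ι → Vec m) (q : Vec m) (j : ι) : Prop :=
  ∀ j', |⟪D j', q⟫| ≤ |⟪D j, q⟫|

def mpUpdate (D : ι → Vec m) (q : Vec m) : Option ι → Vec m
  | some j => q - (⟪D j, q⟫ / ‖D j‖ ^ 2) • D j
  | none => q

theorem mpUpdate_map_linearIsometryEquiv (V : Vec m ≃ₗᵢ[ℝ] Vec m) (D : ι → Vec m) (q : Vec m)
    (o : Option ι) : mpUpdate (fun j => V (D j)) (V q) o = V (mpUpdate D q o) := by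
  cases o <;> simp [mpUpdate, LinearIsometryEquiv.inner_map_map]

theorem measurable_mpUpdate (o : Option ι) :
    Measurable fun p : (ι → Vec m) × Vec m => mpUpdate p.1 p.2 o := by
  cases o <;> simp only [mpUpdate] <;> fun_prop

variable [Fintype ι]

theorem measurableSet_isMPMax (j : ι) :
    MeasurableSet {p : (ι → Vec m) × Vec m | IsMPMax p.1 p.2 j} := by
  simp only [IsMPMax, Set.ofPred_forall]
  exact .iInter fun j' => measurableSet_le (by fun_prop) (by fun_prop)

variable [LinearOrder ι]

theorem mpSelect_eq_some_iff {D : ι → Vec m} {q : Vec m} {j : ι} :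
    mpSelect D q = some j ↔ IsLeast {k | IsMPMax D q k} j := by
  unfold mpSelect
  dsimp only
  split_ifs with h
  · have hleast := Finset.isLeast_min' _ h
    simp only [Finset.coe_filter, Finset.mem_univ, true_and] at hleast
    exact ⟨fun hj => Option.some_inj.1 hj ▸ hleast, fun hj => congrArg some (hleast.unique hj)⟩
  · exact ⟨nofun, fun hj => h ⟨j, Finset.mem_filter.2 ⟨Finset.mem_univ j, hj.1⟩⟩⟩

theorem mpSelect_eq_none_iff {D : ι → Vec m} {q : Vec m} :
    mpSelect D q = none ↔ IsEmpty ι := by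
  unfold mpSelect
  dsimp only
  split_ifs with h
  · simpa using h.nonempty
  · simp only [true_iff]
    by_contra hne
    rw [not_isEmpty_iff] at hne
    obtain ⟨j, -, hj⟩ := Finset.exists_max_image Finset.univ (fun j => |⟪D j, q⟫|)
      Finset.univ_nonempty
    exact h ⟨j, Finset.mem_filter.2 ⟨Finset.mem_univ j, fun j' => hj j' (Finset.mem_univ _)⟩⟩

theorem mpRes_succ (D : ι → Vec m) (y : Vec m) (s : ℕ) :
    mpRes D y (s + 1) = mpUpdate D (mpRes D y s) (mpSelect D (mpRes D y s)) := by
  rw [mpRes]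
  cases mpSelect D (mpRes D y s) <;> rfl

theorem mpSelect_map_linearIsometryEquiv (V : Vec m ≃ₗᵢ[ℝ] Vec m) (D : ι → Vec m) (q : Vec m) :
    mpSelect (fun j => V (D j)) (V q) = mpSelect D q := by
  simp only [mpSelect, LinearIsometryEquiv.inner_map_map]

theorem mpRes_map_linearIsometryEquiv (V : Vec m ≃ₗᵢ[ℝ] Vec m) (D : ι → Vec m) (y : Vec m)
    (s : ℕ) : mpRes (fun j => V (D j)) (V y) s = V (mpRes D y s) := by
  induction s with
  | zero => rfl
  | succ s ih =>
    rw [mpRes_succ, mpRes_succ, ih, mpSelect_map_linearIsometryEquiv,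
      mpUpdate_map_linearIsometryEquiv]

theorem measurableSet_mpSelect_eq (o : Option ι) :
    MeasurableSet {p : (ι → Vec m) × Vec m | mpSelect p.1 p.2 = o} := by
  cases o with
  | none => simp only [mpSelect_eq_none_iff]; exact .const _
  | some j =>
    have hfiber : {p : (ι → Vec m) × Vec m | mpSelect p.1 p.2 = some j} =
        {p | IsMPMax p.1 p.2 j} ∩ ⋂ k, {p | IsMPMax p.1 p.2 k → j ≤ k} := by
      ext p
      simp [mpSelect_eq_some_iff, IsLeast, lowerBounds]
    rw [hfiber]
    exact (measurableSet_isMPMax j).inter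
      (.iInter fun k => (measurableSet_isMPMax k).imp (.const _))

theorem measurable_mpStep :
    Measurable fun p : (ι → Vec m) × Vec m => mpUpdate p.1 p.2 (mpSelect p.1 p.2) :=
  measurable_of_countable_cases (g := fun p : (ι → Vec m) × Vec m => mpSelect p.1 p.2)
    (F := fun o p => mpUpdate p.1 p.2 o) measurableSet_mpSelect_eq measurable_mpUpdate

theorem measurable_mpRes (s : ℕ) :
    Measurable fun p : (ι → Vec m) × Vec m => mpRes p.1 p.2 s := by
  induction s with
  | zero => exact measurable_snd
  | succ s ih =>
    have hstep := measurable_mpStep.comp (measurable_fst.prodMk ih)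
    simpa only [mpRes_succ, Function.comp_def] using hstep

end MatchingPursuit

section Invariance

open WithLp

variable {Ω : Type*} [MeasurableSpace Ω] {μ : Measure Ω}

theorem map_comp_eq_map_of_commute {α : Type*} [MeasurableSpace α] {r : Ω → α} {P V : α → α}
    (hr : Measurable r) (hP : Measurable P) (hV : Measurable V) (hcomm : ∀ x, V (P x) = P (V x))
    (hVr : μ.map (fun ω => V (r ω)) = μ.map r) :
    μ.map (fun ω => V (P (r ω))) = μ.map (fun ω => P (r ω)) :=
  calc μ.map (fun ω => V (P (r ω))) = (μ.map (fun ω => V (r ω))).map P := by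
        simp_rw [hcomm]
        exact (Measure.map_map hP (hV.comp hr)).symm
    _ = μ.map (fun ω => P (r ω)) := by rw [hVr, Measure.map_map hP hr]; rfl

variable [IsProbabilityMeasure μ]

theorem ProbabilityTheory.IndepFun.map_prodMk_comp_eq {β γ : Type*} [MeasurableSpace β]
    [MeasurableSpace γ] {X : Ω → β} {Y : Ω → γ} {f : β → β} {g : γ → γ} (hXY : IndepFun X Y μ)
    (hX : Measurable X) (hY : Measurable Y) (hf : Measurable f) (hg : Measurable g)
    (hfX : μ.map (fun ω => f (X ω)) = μ.map X) (hgY : μ.map (fun ω => g (Y ω)) = μ.map Y) :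
    μ.map (fun ω => (f (X ω), g (Y ω))) = μ.map (fun ω => (X ω, Y ω)) := by
  have hfg := (indepFun_iff_map_prod_eq_prod_map_map (hf.comp hX).aemeasurable
    (hg.comp hY).aemeasurable).1 (hXY.comp hf hg)
  simp only [Function.comp_def] at hfg
  rw [hfg, (indepFun_iff_map_prod_eq_prod_map_map hX.aemeasurable hY.aemeasurable).1 hXY, hfX,
    hgY]

theorem ProbabilityTheory.iIndepFun.map_pi_comp_eq {κ : Type*} [Fintype κ] {β : κ → Type*}
    [∀ j, MeasurableSpace (β j)] {X : ∀ j, Ω → β j} {f : ∀ j, β j → β j}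
    (hX : iIndepFun X μ) (hXm : ∀ j, Measurable (X j)) (hf : ∀ j, Measurable (f j))
    (hfX : ∀ j, μ.map (fun ω => f j (X j ω)) = μ.map (X j)) :
    μ.map (fun ω j => f j (X j ω)) = μ.map (fun ω j => X j ω) := by
  have hfX' := (iIndepFun_iff_map_fun_eq_pi_map fun j => ((hf j).comp (hXm j)).aemeasurable).1
    (hX.comp f hf)
  simp only [Function.comp_def] at hfX'
  rw [hfX', (iIndepFun_iff_map_fun_eq_pi_map fun j => (hXm j).aemeasurable).1 hX]
  exact congrArg Measure.pi (funext hfX)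

theorem map_toLp_pi_gaussianReal {ι : Type*} [Fintype ι] (v : ℝ≥0) :
    (Measure.pi fun _ : ι => gaussianReal 0 v).map (toLp 2) =
      (stdGaussian (EuclideanSpace ℝ ι)).map ((√v : ℝ) • ·) := by
  have hv : gaussianReal 0 v = (gaussianReal 0 1).map ((√v : ℝ) * ·) := by
    rw [gaussianReal_map_const_mul]
    congr 1
    · simp
    · ext; simp
  rw [← map_pi_eq_stdGaussian, Measure.map_map (by fun_prop) (by fun_prop)]
  simp_rw [hv]
  rw [← Measure.pi_map_pi (fun _ => by fun_prop), Measure.map_map (by fun_prop) (by fun_prop)]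
  rfl

theorem map_linearIsometryEquiv_map_toLp_pi_gaussianReal {ι : Type*} [Fintype ι] (v : ℝ≥0)
    (V : EuclideanSpace ℝ ι ≃ₗᵢ[ℝ] EuclideanSpace ℝ ι) :
    ((Measure.pi fun _ : ι => gaussianReal 0 v).map (toLp 2)).map V =
      (Measure.pi fun _ : ι => gaussianReal 0 v).map (toLp 2) := by
  have hcomm : V ∘ ((√v : ℝ) • ·) = ((√v : ℝ) • ·) ∘ V := by
    ext1 x
    exact V.map_smul _ x
  rw [map_toLp_pi_gaussianReal, Measure.map_map (by fun_prop) (by fun_prop), hcomm,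
    ← Measure.map_map (by fun_prop) (by fun_prop), stdGaussian_map]

theorem map_linearIsometryEquiv_of_iIndepFun_gaussianReal {ι : Type*} [Fintype ι]
    {Z : Ω → EuclideanSpace ℝ ι} (hZ : Measurable Z) {v : ℝ≥0}
    (hindep : iIndepFun (fun k ω => Z ω k) μ)
    (hgauss : ∀ k, μ.map (fun ω => Z ω k) = gaussianReal 0 v)
    (V : EuclideanSpace ℝ ι ≃ₗᵢ[ℝ] EuclideanSpace ℝ ι) :
    μ.map (fun ω => V (Z ω)) = μ.map Z := by
  have hlaw : μ.map Z = (Measure.pi fun _ : ι => gaussianReal 0 v).map (toLp 2) := by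
    have hcoord : Measurable fun ω k => Z ω k := by fun_prop
    rw [← funext hgauss, ← (iIndepFun_iff_map_fun_eq_pi_map fun k => by fun_prop).1 hindep,
      Measure.map_map (by fun_prop) hcoord]
    rfl
  calc μ.map (fun ω => V (Z ω)) = (μ.map Z).map V :=
        (Measure.map_map V.continuous.measurable hZ).symm
    _ = μ.map Z := by rw [hlaw, map_linearIsometryEquiv_map_toLp_pi_gaussianReal]

end Invariance

noncomputable section RangeRotation

variable {E F : Type*} [NormedAddCommGroup E] [InnerProductSpace ℝ E]
  [NormedAddCommGroup F] [InnerProductSpace ℝ F] (J : F →ₗᵢ[ℝ] E)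

theorem LinearIsometry.apply_mem_range (c : F) : J c ∈ LinearMap.range J.toLinearMap :=
  LinearMap.mem_range_self _ c

variable [FiniteDimensional ℝ E] [FiniteDimensional ℝ F]

theorem LinearIsometry.adjoint_apply_apply (c : F) :
    LinearMap.adjoint J.toLinearMap (J c) = c :=
  LinearMap.congr_fun J.adjoint_comp_self' c

theorem LinearIsometry.starProjection_range_apply (x : E) :
    (LinearMap.range J.toLinearMap).starProjection x = J (LinearMap.adjoint J.toLinearMap x) := by
  refine Submodule.eq_starProjection_of_mem_of_inner_eq_zero (J.apply_mem_range _) fun w hw => ?_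
  obtain ⟨c, rfl⟩ := hw
  rw [inner_sub_left, sub_eq_zero]
  change ⟪x, J c⟫ = ⟪J (LinearMap.adjoint J.toLinearMap x), J c⟫
  rw [J.inner_map_map, LinearMap.adjoint_inner_left]
  rfl

def rangeRotationMap (W : F ≃ₗᵢ[ℝ] F) : E →ₗ[ℝ] E :=
  J.toLinearMap ∘ₗ W.toLinearEquiv.toLinearMap ∘ₗ LinearMap.adjoint J.toLinearMap +
    (LinearMap.range J.toLinearMap)ᗮ.starProjection.toLinearMap

theorem rangeRotationMap_apply (W : F ≃ₗᵢ[ℝ] F) (x : E) :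
    rangeRotationMap J W x = J (W (LinearMap.adjoint J.toLinearMap x)) +
      (LinearMap.range J.toLinearMap)ᗮ.starProjection x :=
  rfl

theorem norm_rangeRotationMap_apply (W : F ≃ₗᵢ[ℝ] F) (x : E) :
    ‖rangeRotationMap J W x‖ = ‖x‖ := by
  set K := LinearMap.range J.toLinearMap
  have horth : ⟪J (W (LinearMap.adjoint J.toLinearMap x)), Kᗮ.starProjection x⟫ = 0 :=
    Submodule.inner_right_of_mem_orthogonal (J.apply_mem_range _) (Kᗮ.starProjection_apply_mem x)
  have hpar : ‖LinearMap.adjoint J.toLinearMap x‖ = ‖K.orthogonalProjectionOnto x‖ := by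
    rw [← J.norm_map, ← J.starProjection_range_apply]
    rfl
  rw [← sq_eq_sq₀ (norm_nonneg _) (norm_nonneg _), rangeRotationMap_apply, norm_add_sq_real,
    horth, J.norm_map, W.norm_map, hpar, Submodule.norm_sq_eq_add_norm_sq_projection x K,
    mul_zero, add_zero]
  rfl

/-- The paper's `V∥` is `rangeRotation U W`, and its `V⊥` is `rangeRotation U_o W'`, since
`U_o U_oᵀ = P⊥`. -/
def rangeRotation (W : F ≃ₗᵢ[ℝ] F) : E ≃ₗᵢ[ℝ] E :=
  LinearIsometryEquiv.ofSurjective ⟨rangeRotationMap J W, norm_rangeRotationMap_apply J W⟩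
    ((LinearMap.injective_iff_surjective_of_finrank_eq_finrank rfl).1
      (LinearIsometry.injective ⟨rangeRotationMap J W, norm_rangeRotationMap_apply J W⟩))

theorem rangeRotation_apply (W : F ≃ₗᵢ[ℝ] F) (x : E) :
    rangeRotation J W x = J (W (LinearMap.adjoint J.toLinearMap x)) +
      (LinearMap.range J.toLinearMap)ᗮ.starProjection x :=
  rfl

theorem rangeRotation_apply_apply (W : F ≃ₗᵢ[ℝ] F) (c : F) :
    rangeRotation J W (J c) = J (W c) := by
  rw [rangeRotation_apply, J.adjoint_apply_apply, Submodule.starProjection_orthogonal_val,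
    Submodule.starProjection_eq_self_iff.2 (J.apply_mem_range c), sub_self, add_zero]

theorem rangeRotation_apply_of_mem_orthogonal (W : F ≃ₗᵢ[ℝ] F) {y : E}
    (hy : y ∈ (LinearMap.range J.toLinearMap)ᗮ) : rangeRotation J W y = y := by
  have hker : LinearMap.adjoint J.toLinearMap y = 0 := by
    rwa [LinearMap.orthogonal_range] at hy
  rw [rangeRotation_apply, hker, map_zero, map_zero, zero_add,
    Submodule.starProjection_eq_self_iff.2 hy]

theorem starProjection_range_rangeRotation (W : F ≃ₗᵢ[ℝ] F) (x : E) :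
    (LinearMap.range J.toLinearMap).starProjection (rangeRotation J W x) =
      J (W (LinearMap.adjoint J.toLinearMap x)) :=
  Submodule.eq_starProjection_of_mem_orthogonal' (J.apply_mem_range _)
    (Submodule.starProjection_apply_mem _ x) (rangeRotation_apply J W x)

theorem rangeRotation_starProjection_range (W : F ≃ₗᵢ[ℝ] F) (x : E) :
    rangeRotation J W ((LinearMap.range J.toLinearMap).starProjection x) =
      (LinearMap.range J.toLinearMap).starProjection (rangeRotation J W x) := by
  rw [starProjection_range_rangeRotation, J.starProjection_range_apply, rangeRotation_apply_apply]

end RangeRotation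

section Projections

variable {M k : ℕ} (J : EuclideanSpace ℝ (Fin k) →ₗᵢ[ℝ] Vec M)

theorem projPar_eq_starProjection :
    projPar J = (LinearMap.range J.toLinearMap).starProjection :=
  rfl

theorem projPerp_eq_starProjection_orthogonal :
    projPerp J = (LinearMap.range J.toLinearMap)ᗮ.starProjection := by
  ext1 x
  rw [Submodule.starProjection_orthogonal_val]
  rfl

theorem rangeRotation_apply_eq_add_projPerp
    (W : EuclideanSpace ℝ (Fin k) ≃ₗᵢ[ℝ] EuclideanSpace ℝ (Fin k)) (x : Vec M) :
    rangeRotation J W x = J (W (LinearMap.adjoint J.toLinearMap x)) + projPerp J x := by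
  rw [rangeRotation_apply, projPerp_eq_starProjection_orthogonal]

variable {J} {k' : ℕ} {J' : EuclideanSpace ℝ (Fin k') →ₗᵢ[ℝ] Vec M}

theorem projPerp_eq_projPar_of_range_eq_orthogonal
    (h : LinearMap.range J'.toLinearMap = (LinearMap.range J.toLinearMap)ᗮ) :
    projPerp J = projPar J' := by
  simp only [projPerp_eq_starProjection_orthogonal, projPar_eq_starProjection, h]

theorem projPar_eq_projPerp_of_range_eq_orthogonal
    (h : LinearMap.range J'.toLinearMap = (LinearMap.range J.toLinearMap)ᗮ) :
    projPar J = projPerp J' := by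
  simp only [projPerp_eq_starProjection_orthogonal, projPar_eq_starProjection, h,
    Submodule.orthogonal_orthogonal]

end Projections

section ReducedMP

variable {L M : ℕ} {d n : Fin L → ℕ}
  (U : (ℓ : Fin L) → EuclideanSpace ℝ (Fin (d ℓ)) →ₗᵢ[ℝ] Vec M) (ℓ : Fin L) (i : Fin (n ℓ)) (s : ℕ)

noncomputable def redMPresOfSample (t : Fin (n ℓ) → EuclideanSpace ℝ (Fin (d ℓ)) × Vec M) :
    Vec M :=
  mpRes (fun j : {j // j ≠ i} => U ℓ (t j).1 + (t j).2) (U ℓ (t i).1 + (t i).2) s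

variable {U ℓ i s}

theorem measurable_redMPresOfSample : Measurable (redMPresOfSample U ℓ i s) := by
  have hU := (U ℓ).continuous.measurable
  exact (measurable_mpRes s).comp
    (f := fun t : Fin (n ℓ) → EuclideanSpace ℝ (Fin (d ℓ)) × Vec M =>
      ((fun j : {j // j ≠ i} => U ℓ (t j).1 + (t j).2), U ℓ (t i).1 + (t i).2))
    (by fun_prop)

theorem redMPresOfSample_map
    (W : EuclideanSpace ℝ (Fin (d ℓ)) ≃ₗᵢ[ℝ] EuclideanSpace ℝ (Fin (d ℓ)))
    (V : Vec M ≃ₗᵢ[ℝ] Vec M) (hV : ∀ c, V (U ℓ c) = U ℓ (W c))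
    (t : Fin (n ℓ) → EuclideanSpace ℝ (Fin (d ℓ)) × Vec M) :
    V (redMPresOfSample U ℓ i s t) =
      redMPresOfSample U ℓ i s fun j => (W (t j).1, V (t j).2) := by
  simp only [redMPresOfSample, ← hV, ← map_add, mpRes_map_linearIsometryEquiv]

end ReducedMP

namespace SubspaceClusterModel

variable {Ω : Type*} [MeasurableSpace Ω] {μ : Measure Ω} [IsProbabilityMeasure μ]
  {L M : ℕ} {d n : Fin L → ℕ} {σ : ℝ}
  {U : (ℓ : Fin L) → EuclideanSpace ℝ (Fin (d ℓ)) →ₗᵢ[ℝ] Vec M}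
  {a : (ℓ : Fin L) → Fin (n ℓ) → Ω → EuclideanSpace ℝ (Fin (d ℓ))}
  {z : (ℓ : Fin L) → Fin (n ℓ) → Ω → Vec M}
  (hmodel : SubspaceClusterModel Ω μ L M d n σ U a z) (ℓ : Fin L)
  (W : EuclideanSpace ℝ (Fin (d ℓ)) ≃ₗᵢ[ℝ] EuclideanSpace ℝ (Fin (d ℓ)))
  (V : Vec M ≃ₗᵢ[ℝ] Vec M)

include hmodel

theorem map_pair_eq (j : Fin (n ℓ)) :
    μ.map (fun ω => (W (a ℓ j ω), V (z ℓ j ω))) = μ.map (fun ω => (a ℓ j ω, z ℓ j ω)) :=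
  (hmodel.indep_az ℓ j).map_prodMk_comp_eq (hmodel.meas_a ℓ j) (hmodel.meas_z ℓ j)
    W.continuous.measurable V.continuous.measurable (hmodel.rotinv_a ℓ j W)
    (map_linearIsometryEquiv_of_iIndepFun_gaussianReal (hmodel.meas_z ℓ j)
      (hmodel.coord_indep_z ℓ j) (hmodel.gauss_z ℓ j) V)

theorem map_cluster_eq :
    μ.map (fun ω j => (W (a ℓ j ω), V (z ℓ j ω))) = μ.map (fun ω j => (a ℓ j ω, z ℓ j ω)) :=
  iIndepFun.map_pi_comp_eq (f := fun _ p => (W p.1, V p.2))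
    (hmodel.indep_pts.precomp sigma_mk_injective)
    (fun j => (hmodel.meas_a ℓ j).prodMk (hmodel.meas_z ℓ j)) (fun _ => by fun_prop)
    (hmodel.map_pair_eq ℓ W V)

theorem map_redMPres_eq (i : Fin (n ℓ)) (s : ℕ) (hV : ∀ c, V (U ℓ c) = U ℓ (W c)) :
    μ.map (fun ω => V (redMPres U a z ℓ i s ω)) = μ.map (redMPres U a z ℓ i s) := by
  have hsample : Measurable fun ω j => (a ℓ j ω, z ℓ j ω) :=
    measurable_pi_lambda _ fun j => (hmodel.meas_a ℓ j).prodMk (hmodel.meas_z ℓ j)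
  have hrot : Measurable fun ω j => (W (a ℓ j ω), V (z ℓ j ω)) :=
    measurable_pi_lambda _ fun j => (W.continuous.measurable.comp (hmodel.meas_a ℓ j)).prodMk
      (V.continuous.measurable.comp (hmodel.meas_z ℓ j))
  calc μ.map (fun ω => V (redMPres U a z ℓ i s ω))
      = (μ.map fun ω j => (W (a ℓ j ω), V (z ℓ j ω))).map (redMPresOfSample U ℓ i s) := by
        rw [Measure.map_map measurable_redMPresOfSample hrot]
        congr 1
        funext ω
        exact redMPresOfSample_map W V hV fun j => (a ℓ j ω, z ℓ j ω)
    _ = μ.map (redMPres U a z ℓ i s) := by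
        rw [hmodel.map_cluster_eq, Measure.map_map measurable_redMPresOfSample hsample]
        rfl

theorem map_rangeRotation_projPar_redMPres {k : ℕ}
    (J : EuclideanSpace ℝ (Fin k) →ₗᵢ[ℝ] Vec M)
    (W' : EuclideanSpace ℝ (Fin k) ≃ₗᵢ[ℝ] EuclideanSpace ℝ (Fin k)) (i : Fin (n ℓ)) (s : ℕ)
    (hJ : ∀ c, rangeRotation J W' (U ℓ c) = U ℓ (W c)) :
    μ.map (fun ω => rangeRotation J W' (projPar J (redMPres U a z ℓ i s ω))) =
      μ.map (fun ω => projPar J (redMPres U a z ℓ i s ω)) :=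
  map_comp_eq_map_of_commute
    (measurable_redMPresOfSample.comp
      (measurable_pi_lambda _ fun j => (hmodel.meas_a ℓ j).prodMk (hmodel.meas_z ℓ j)))
    (projPar_eq_starProjection J ▸ (Submodule.starProjection _).continuous.measurable)
    (rangeRotation J W').continuous.measurable (rangeRotation_starProjection_range J W')
    (hmodel.map_redMPres_eq ℓ W _ i s hJ)

end SubspaceClusterModel

/-- **Lemma 11 (rotational invariance of the reduced-MP residual).** -/
theorem reducedMP_residual_rotational_invariance
    (Ω : Type) [MeasurableSpace Ω] (μ : Measure Ω) [IsProbabilityMeasure μ]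
    (L M : ℕ) (d n : Fin L → ℕ) (σ : ℝ)
    (U : (ℓ : Fin L) → EuclideanSpace ℝ (Fin (d ℓ)) →ₗᵢ[ℝ] Vec M)
    (a : (ℓ : Fin L) → Fin (n ℓ) → Ω → EuclideanSpace ℝ (Fin (d ℓ)))
    (z : (ℓ : Fin L) → Fin (n ℓ) → Ω → Vec M)
    (hmodel : SubspaceClusterModel Ω μ L M d n σ U a z)
    (ℓ : Fin L) (i : Fin (n ℓ)) (s : ℕ) :
    (∀ W : EuclideanSpace ℝ (Fin (d ℓ)) ≃ₗᵢ[ℝ] EuclideanSpace ℝ (Fin (d ℓ)),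
      Measure.map
        (fun ω => U ℓ (W (LinearMap.adjoint (U ℓ).toLinearMap
            (projPar (U ℓ) (redMPres U a z ℓ i s ω)))) +
          projPerp (U ℓ) (projPar (U ℓ) (redMPres U a z ℓ i s ω))) μ =
      Measure.map (fun ω => projPar (U ℓ) (redMPres U a z ℓ i s ω)) μ) ∧
    (∀ (Uo : EuclideanSpace ℝ (Fin (M - d ℓ)) →ₗᵢ[ℝ] Vec M),
      LinearMap.range Uo.toLinearMap = (LinearMap.range (U ℓ).toLinearMap)ᗮ →
      ∀ W' : EuclideanSpace ℝ (Fin (M - d ℓ)) ≃ₗᵢ[ℝ] EuclideanSpace ℝ (Fin (M - d ℓ)),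
        Measure.map
          (fun ω => projPar (U ℓ) (projPerp (U ℓ) (redMPres U a z ℓ i s ω)) +
            Uo (W' (LinearMap.adjoint Uo.toLinearMap
              (projPerp (U ℓ) (redMPres U a z ℓ i s ω))))) μ =
        Measure.map (fun ω => projPerp (U ℓ) (redMPres U a z ℓ i s ω)) μ) := by
  refine ⟨fun W => ?_, fun Uo hUo W' => ?_⟩
  · simpa only [rangeRotation_apply_eq_add_projPerp] using
      hmodel.map_rangeRotation_projPar_redMPres ℓ W (U ℓ) W i s (rangeRotation_apply_apply _ W)
  · have hfix (c : EuclideanSpace ℝ (Fin (d ℓ))) : rangeRotation Uo W' (U ℓ c) = U ℓ c := by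
      refine rangeRotation_apply_of_mem_orthogonal Uo W' ?_
      rw [hUo, Submodule.orthogonal_orthogonal]
      exact (U ℓ).apply_mem_range c
    rw [projPar_eq_projPerp_of_range_eq_orthogonal hUo,
      projPerp_eq_projPar_of_range_eq_orthogonal hUo]
    simp_rw [add_comm (projPerp Uo _)]
    simpa only [rangeRotation_apply_eq_add_projPerp] using
      hmodel.map_rangeRotation_projPar_redMPres ℓ (.refl ℝ _) Uo W' i s hfix
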